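/- arXiv:1409.7319 — 3 statements merged into one kernel-verified Lean document; each statement's English description precedes it below -/
import Mathlib

section
/- Let m ≥ 2 be an integer, let p₁, p₂ ∈ ℂ^m be distinct points, and let A₁, A₂ ∈ SL_m(ℂ). Then there exists an algebraic (polynomial) automorphism φ of ℂ^m such that φ(p₁) = p₁, φ(p₂) = p₂, and the differentials satisfy D_{p₁}φ = A₁ and D_{p₂}φ = A₂. -/
/-!
The pairs `(D_{p₁}φ, D_{p₂}φ)`, for `φ` a polynomial automorphism fixing `p₁` and `p₂`, form a
monoid, and conjugating by an affine automorphism we may assume that `p₁` and `p₂` differ in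
every coordinate. The shear `x ↦ x + P(x_j) e_i`, where `P` vanishes at `p₁ j` and `p₂ j` and
`P'` takes the values `c` and `0` there, realizes the pair `(transvection i j c, 1)`. As
transvections generate `SL_m`, every pair `(A, 1)` is realized; by symmetry so is every `(1, B)`,
hence every `(A, B) = (A, 1) * (1, B)`.
-/

/-- A map `ℂ^σ → ℂ^τ` is polynomial (algebraic) if each component is given by
evaluation of a multivariate polynomial. -/
def IsPolyMap {σ τ : Type*} (f : (σ → ℂ) → (τ → ℂ)) : Prop :=
  ∃ P : τ → MvPolynomial σ ℂ, ∀ x t, f x t = MvPolynomial.eval x (P t)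

open Matrix Polynomial

theorem exists_linearEquiv_apply_eq {K V : Type*} [Field K] [AddCommGroup V] [Module K V]
    {v w : V} (hv : v ≠ 0) (hw : w ≠ 0) : ∃ g : V ≃ₗ[K] V, g v = w := by
  obtain ⟨g, hg⟩ := Submodule.exists_linearEquiv_restrict_eq
    ((LinearEquiv.toSpanNonzeroSingleton K V v hv).symm.trans
      (LinearEquiv.toSpanNonzeroSingleton K V w hw))
  have h1 : (LinearEquiv.toSpanNonzeroSingleton K V v hv).symm
      ⟨v, Submodule.mem_span_singleton_self v⟩ = 1 :=
    (LinearEquiv.symm_apply_eq _).2 (LinearEquiv.toSpanNonzeroSingleton_one K V v hv).symm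
  exact ⟨g, by simpa [h1] using (hg ⟨v, Submodule.mem_span_singleton_self v⟩).symm⟩

theorem Polynomial.exists_hermite_interpolant {K : Type*} [Field K] {α β : K} (h : α ≠ β)
    (c : K) :
    ∃ P : K[X], P.eval α = 0 ∧ P.eval β = 0 ∧ P.derivative.eval α = c ∧
      P.derivative.eval β = 0 := by
  refine ⟨C (c / (α - β) ^ 2) * (X - C α) * (X - C β) ^ 2, by simp, by simp, ?_,
    by simp [derivative_mul, derivative_sq]⟩
  have hαβ : α - β ≠ 0 := sub_ne_zero.2 h
  simp [derivative_mul]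
  field_simp

namespace Matrix

variable {n K : Type*} [Fintype n] [DecidableEq n] [Field K]

variable (n K) in
def transvectionSubmonoid : Submonoid (Matrix n n K) :=
  Submonoid.closure (Set.range TransvectionStruct.toMatrix)

theorem diagonal_mulSingle_mul_mulSingle_inv_eq {i j : n} (hij : i ≠ j) {a : K} (ha : a ≠ 0) :
    diagonal (Pi.mulSingle i a * Pi.mulSingle j a⁻¹) =
      transvection i j a * transvection j i (-a⁻¹) * transvection i j (a - 1) *
        transvection j i 1 * transvection i j (-1) := by
  simp only [transvection, add_mul, mul_add, one_mul, mul_one, single_mul_single_same,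
    single_mul_single_of_ne _ _ _ _ hij, single_mul_single_of_ne _ _ _ _ hij.symm, add_zero]
  ext r s
  simp only [diagonal_apply, Pi.mul_apply, Pi.mulSingle_apply, add_apply, one_apply, single_apply]
  have cases : ∀ r, r = i ∨ r = j ∨ (r ≠ i ∧ i ≠ r ∧ r ≠ j ∧ j ≠ r) := by tauto
  rcases cases r with rfl | rfl | hr <;> rcases cases s with rfl | rfl | hs <;>
    simp [hij.symm, *] <;> field_simp <;> ring

theorem transvection_mem_transvectionSubmonoid {i j : n} (hij : i ≠ j) (c : K) :
    transvection i j c ∈ transvectionSubmonoid n K :=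
  Submonoid.subset_closure ⟨⟨i, j, hij, c⟩, rfl⟩

theorem diagonal_mem_transvectionSubmonoid {D : n → K} (hD : ∏ i, D i = 1) :
    diagonal D ∈ transvectionSubmonoid n K := by
  rcases isEmpty_or_nonempty n with _ | ⟨⟨j⟩⟩
  · exact Subsingleton.elim 1 (diagonal D) ▸ one_mem _
  have hD0 : ∀ k, D k ≠ 0 := fun k =>
    Finset.prod_ne_zero_iff.1 (hD ▸ one_ne_zero) k (Finset.mem_univ k)
  have hfactor : D = ∏ k, Pi.mulSingle k (D k) * Pi.mulSingle j (D k)⁻¹ := by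
    have hj : ∏ k, (Pi.mulSingle j (D k)⁻¹ : n → K) = 1 := by
      simpa [Finset.prod_inv_distrib, hD] using
        (map_prod (MonoidHom.mulSingle (fun _ => K) j) (fun k => (D k)⁻¹) Finset.univ).symm
    rw [Finset.prod_mul_distrib, Finset.univ_prod_mulSingle, hj, mul_one]
  -- diagonal matrices commute, so the product can be taken in `n → K`
  change D ∈ (transvectionSubmonoid n K).comap (diagonalRingHom n K).toMonoidHom
  rw [hfactor]
  refine Submonoid.prod_mem _ fun k _ => ?_
  rcases eq_or_ne k j with rfl | hkj
  · simp [← Pi.mulSingle_mul, mul_inv_cancel₀ (hD0 k)]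
  · rw [Submonoid.mem_comap]
    change diagonal _ ∈ _
    rw [diagonal_mulSingle_mul_mulSingle_inv_eq hkj (hD0 k)]
    refine mul_mem (mul_mem (mul_mem (mul_mem ?_ ?_) ?_) ?_) ?_ <;>
      first
      | exact transvection_mem_transvectionSubmonoid hkj _
      | exact transvection_mem_transvectionSubmonoid hkj.symm _

theorem mem_transvectionSubmonoid_of_det_eq_one {A : Matrix n n K} (hA : A.det = 1) :
    A ∈ transvectionSubmonoid n K :=
  diagonal_transvection_induction (· ∈ transvectionSubmonoid n K) A
    (fun D hD => diagonal_mem_transvectionSubmonoid (by rwa [det_diagonal, hA] at hD))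
    (fun t => Submonoid.subset_closure ⟨t, rfl⟩) (fun _ _ => mul_mem)

theorem exists_units_mulVec_eq {v w : n → K} (hv : v ≠ 0) (hw : w ≠ 0) :
    ∃ C : (Matrix n n K)ˣ, (C : Matrix n n K) *ᵥ v = w := by
  obtain ⟨g, hg⟩ := exists_linearEquiv_apply_eq (K := K) hv hw
  refine ⟨⟨LinearMap.toMatrix' g, LinearMap.toMatrix' g.symm, ?_, ?_⟩, ?_⟩
  · rw [← LinearMap.toMatrix'_comp]; simp
  · rw [← LinearMap.toMatrix'_comp]; simp
  · simpa [LinearMap.toMatrix'_mulVec] using hg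

end Matrix

section PolynomialAutomorphisms

variable {σ τ υ : Type*}

theorem IsPolyMap.comp {f : (τ → ℂ) → (υ → ℂ)} {g : (σ → ℂ) → (τ → ℂ)}
    (hf : IsPolyMap f) (hg : IsPolyMap g) : IsPolyMap (f ∘ g) := by
  obtain ⟨P, hP⟩ := hf
  obtain ⟨Q, hQ⟩ := hg
  refine ⟨fun t => MvPolynomial.bind₁ Q (P t), fun x t => ?_⟩
  rw [Function.comp_apply, hP, funext (hQ x)]
  exact (MvPolynomial.eval₂Hom_bind₁ _ _ _ _).symm

theorem isPolyMap_id : IsPolyMap (id : (σ → ℂ) → (σ → ℂ)) :=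
  ⟨MvPolynomial.X, fun _ _ => (MvPolynomial.eval_X ..).symm⟩

theorem isPolyMap_mulVec_add [Fintype σ] (M : Matrix τ σ ℂ) (b : τ → ℂ) :
    IsPolyMap fun x => M *ᵥ x + b :=
  ⟨fun t => ∑ s, MvPolynomial.C (M t s) * MvPolynomial.X s + MvPolynomial.C (b t),
    fun x t => by simp [mulVec, dotProduct]⟩

theorem isPolyMap_add_eval_smul (j : σ) (P : ℂ[X]) (v : σ → ℂ) :
    IsPolyMap fun x => x + P.eval (x j) • v := by
  refine ⟨fun t => MvPolynomial.X t + MvPolynomial.C (v t) * aeval (MvPolynomial.X j) P,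
    fun x t => ?_⟩
  have h := Polynomial.aeval_algHom_apply (MvPolynomial.aeval x) (MvPolynomial.X j) P
  rw [MvPolynomial.aeval_X, MvPolynomial.aeval_eq_eval, Polynomial.coe_aeval_eq_eval] at h
  simp [h, mul_comm]

variable (σ) in
def polyAut : Subgroup (Equiv.Perm (σ → ℂ)) where
  carrier := {e | IsPolyMap e ∧ IsPolyMap e.symm}
  mul_mem' ha hb := ⟨ha.1.comp hb.1, hb.2.comp ha.2⟩
  one_mem' := ⟨isPolyMap_id, isPolyMap_id⟩
  inv_mem' h := ⟨h.2, h.1⟩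

def shear (j : σ) (v : σ → ℂ) (hv : v j = 0) (P : ℂ[X]) : Equiv.Perm (σ → ℂ) where
  toFun x := x + P.eval (x j) • v
  invFun x := x - P.eval (x j) • v
  left_inv x := by simp [hv]
  right_inv x := by simp [hv]

theorem shear_mem_polyAut (j : σ) (v : σ → ℂ) (hv : v j = 0) (P : ℂ[X]) :
    shear j v hv P ∈ polyAut σ := by
  refine ⟨isPolyMap_add_eval_smul j P v, ?_⟩
  convert isPolyMap_add_eval_smul j (-P) v using 2
  simp [shear, sub_eq_add_neg]

theorem hasFDerivAt_shear [Fintype σ] (j : σ) (v : σ → ℂ) (hv : v j = 0) (P : ℂ[X])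
    (x : σ → ℂ) :
    HasFDerivAt (shear j v hv P)
      (ContinuousLinearMap.id ℂ _ + ((P.derivative.eval (x j)) •
        ContinuousLinearMap.proj j).smulRight v) x := by
  have hj : HasFDerivAt (fun y : σ → ℂ => y j)
      (ContinuousLinearMap.proj j : (σ → ℂ) →L[ℂ] ℂ) x :=
    hasFDerivAt_apply j x
  have hP := (P.hasDerivAt (x j)).comp_hasFDerivAt x hj
  exact (hasFDerivAt_id x).add (hP.smul_const v)

end PolynomialAutomorphisms

section DifferentialPairs

variable {n : Type*} [Fintype n]

theorem hasFDerivAt_mulVec (A : Matrix n n ℂ) (x : n → ℂ) :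
    HasFDerivAt (A *ᵥ ·) (LinearMap.toContinuousLinearMap (mulVecLin A)) x :=
  (LinearMap.toContinuousLinearMap (mulVecLin A)).hasFDerivAt

theorem toContinuousLinearMap_mulVecLin_mul (A B : Matrix n n ℂ) :
    LinearMap.toContinuousLinearMap (mulVecLin (A * B)) =
      (LinearMap.toContinuousLinearMap (mulVecLin A)).comp
        (LinearMap.toContinuousLinearMap (mulVecLin B)) := by
  ext x : 1
  simp [mulVec_mulVec]

variable [DecidableEq n]

def differentialPairs (p₁ p₂ : n → ℂ) : Submonoid (Matrix n n ℂ × Matrix n n ℂ) where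
  carrier := {A | ∃ e ∈ polyAut n, e p₁ = p₁ ∧ e p₂ = p₂ ∧
    HasFDerivAt e (LinearMap.toContinuousLinearMap (mulVecLin A.1)) p₁ ∧
    HasFDerivAt e (LinearMap.toContinuousLinearMap (mulVecLin A.2)) p₂}
  one_mem' := ⟨1, one_mem _, rfl, rfl, by simpa using hasFDerivAt_mulVec 1 p₁,
    by simpa using hasFDerivAt_mulVec 1 p₂⟩
  mul_mem' := by
    rintro A B ⟨e, he, he₁, he₂, hA₁, hA₂⟩ ⟨f, hf, hf₁, hf₂, hB₁, hB₂⟩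
    refine ⟨e * f, mul_mem he hf, by simp [hf₁, he₁], by simp [hf₂, he₂], ?_, ?_⟩
    · rw [Prod.fst_mul, toContinuousLinearMap_mulVecLin_mul]
      exact (hf₁ ▸ hA₁).comp p₁ hB₁
    · rw [Prod.snd_mul, toContinuousLinearMap_mulVecLin_mul]
      exact (hf₂ ▸ hA₂).comp p₂ hB₂

variable {p₁ p₂ : n → ℂ} {A₁ A₂ : Matrix n n ℂ}

theorem differentialPairs_swap (h : (A₁, A₂) ∈ differentialPairs p₁ p₂) :
    (A₂, A₁) ∈ differentialPairs p₂ p₁ :=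
  let ⟨e, he, he₁, he₂, hA₁, hA₂⟩ := h
  ⟨e, he, he₂, he₁, hA₂, hA₁⟩

theorem transvection_one_mem_differentialPairs {i j : n} (hij : i ≠ j) (hp : p₁ j ≠ p₂ j)
    (c : ℂ) : (transvection i j c, 1) ∈ differentialPairs p₁ p₂ := by
  obtain ⟨P, hP₁, hP₂, hP'₁, hP'₂⟩ := exists_hermite_interpolant hp c
  have hv : (Pi.single i 1 : n → ℂ) j = 0 := Pi.single_eq_of_ne hij.symm 1
  refine ⟨shear j _ hv P, shear_mem_polyAut j _ hv P, by simp [shear, hP₁],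
    by simp [shear, hP₂], ?_, ?_⟩
  · convert hasFDerivAt_shear j _ hv P p₁ using 1
    ext x l
    simp [hP'₁, transvection, single_mulVec, Function.update_apply, Pi.single_apply]
  · convert hasFDerivAt_shear j _ hv P p₂ using 1
    ext x : 1
    simp [hP'₂]

theorem mem_differentialPairs_of_conj (C : (Matrix n n ℂ)ˣ) (b : n → ℂ)
    (h : ((C * A₁ * C⁻¹ : Matrix n n ℂ), (C * A₂ * C⁻¹ : Matrix n n ℂ)) ∈
      differentialPairs (C *ᵥ (p₁ - b)) (C *ᵥ (p₂ - b))) :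
    (A₁, A₂) ∈ differentialPairs p₁ p₂ := by
  obtain ⟨e, he, he₁, he₂, hA₁, hA₂⟩ := h
  let θ : Equiv.Perm (n → ℂ) :=
    ⟨fun x => C *ᵥ (x - b), fun y => (↑C⁻¹ : Matrix n n ℂ) *ᵥ y + b,
      fun x => by simp [mulVec_mulVec], fun y => by simp [mulVec_mulVec]⟩
  have hθ : θ ∈ polyAut n := by
    refine ⟨?_, isPolyMap_mulVec_add _ b⟩
    convert isPolyMap_mulVec_add (C : Matrix n n ℂ) (-(C *ᵥ b)) using 2
    simp [θ, sub_eq_add_neg, mulVec_add, mulVec_neg]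
  have hθd : ∀ x, HasFDerivAt θ
      (LinearMap.toContinuousLinearMap (mulVecLin (C : Matrix n n ℂ))) x :=
    fun x => by
      simpa [θ, mulVec_sub] using (hasFDerivAt_mulVec (C : Matrix n n ℂ) x).sub_const (C *ᵥ b)
  have hθsymm : ∀ y, HasFDerivAt θ.symm
      (LinearMap.toContinuousLinearMap (mulVecLin (↑C⁻¹ : Matrix n n ℂ))) y :=
    fun y => (hasFDerivAt_mulVec _ y).add_const b
  have hconj : ∀ A : Matrix n n ℂ,
      LinearMap.toContinuousLinearMap (mulVecLin A) =
        (LinearMap.toContinuousLinearMap (mulVecLin (↑C⁻¹ : Matrix n n ℂ))).comp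
          ((LinearMap.toContinuousLinearMap (mulVecLin (C * A * C⁻¹ : Matrix n n ℂ))).comp
            (LinearMap.toContinuousLinearMap (mulVecLin (C : Matrix n n ℂ)))) := fun A => by
    simp only [← toContinuousLinearMap_mulVecLin_mul, mul_assoc, Units.inv_mul, mul_one,
      Units.inv_mul_cancel_left]
  refine ⟨θ⁻¹ * e * θ, mul_mem (mul_mem (inv_mem hθ) he) hθ, θ.symm_apply_eq.2 he₁,
    θ.symm_apply_eq.2 he₂, ?_, ?_⟩
  · rw [hconj]
    exact (hθsymm _).comp p₁ (hA₁.comp p₁ (hθd p₁))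
  · rw [hconj]
    exact (hθsymm _).comp p₂ (hA₂.comp p₂ (hθd p₂))

theorem mk_one_mem_differentialPairs (hp : ∀ k, p₁ k ≠ p₂ k) (hA : A₁.det = 1) :
    (A₁, 1) ∈ differentialPairs p₁ p₂ := by
  refine Submonoid.closure_le (S := (differentialPairs p₁ p₂).comap (MonoidHom.inl _ _)) |>.2 ?_
    (Matrix.mem_transvectionSubmonoid_of_det_eq_one hA)
  rintro _ ⟨⟨i, j, hij, c⟩, rfl⟩
  exact transvection_one_mem_differentialPairs hij (hp j) c

theorem mem_differentialPairs_of_forall_ne (hp : ∀ k, p₁ k ≠ p₂ k) (hA₁ : A₁.det = 1)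
    (hA₂ : A₂.det = 1) : (A₁, A₂) ∈ differentialPairs p₁ p₂ := by
  simpa using mul_mem (mk_one_mem_differentialPairs hp hA₁)
    (differentialPairs_swap (mk_one_mem_differentialPairs (fun k => (hp k).symm) hA₂))

theorem mem_differentialPairs_of_ne (hp : p₁ ≠ p₂) (hA₁ : A₁.det = 1) (hA₂ : A₂.det = 1) :
    (A₁, A₂) ∈ differentialPairs p₁ p₂ := by
  obtain ⟨k, hk⟩ := Function.ne_iff.1 hp
  -- move `p₁` to `0` and `p₂` to the all-ones vector, whose coordinates all differ from `0`
  obtain ⟨C, hC⟩ := Matrix.exists_units_mulVec_eq (sub_ne_zero.2 hp.symm)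
    (Function.ne_iff.2 ⟨k, one_ne_zero⟩ : (1 : n → ℂ) ≠ 0)
  refine mem_differentialPairs_of_conj C p₁ (mem_differentialPairs_of_forall_ne ?_ ?_ ?_)
  · simp [hC]
  · rwa [det_units_conj]
  · rwa [det_units_conj]

end DifferentialPairs

theorem stmt0_general (m : ℕ) (p₁ p₂ : Fin m → ℂ) (hp : p₁ ≠ p₂)
    (A₁ A₂ : Matrix (Fin m) (Fin m) ℂ) (hA₁ : A₁.det = 1) (hA₂ : A₂.det = 1) :
    ∃ φ ψ : (Fin m → ℂ) → (Fin m → ℂ),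
      IsPolyMap φ ∧ IsPolyMap ψ ∧ ψ ∘ φ = id ∧ φ ∘ ψ = id ∧
      φ p₁ = p₁ ∧ φ p₂ = p₂ ∧
      HasFDerivAt φ (LinearMap.toContinuousLinearMap (Matrix.mulVecLin A₁)) p₁ ∧
      HasFDerivAt φ (LinearMap.toContinuousLinearMap (Matrix.mulVecLin A₂)) p₂ := by
  obtain ⟨e, ⟨hφ, hψ⟩, he₁, he₂, hd₁, hd₂⟩ := mem_differentialPairs_of_ne hp hA₁ hA₂
  exact ⟨e, e.symm, hφ, hψ, e.symm_comp_self, e.self_comp_symm, he₁, he₂, hd₁, hd₂⟩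

/-- Lemma A.2 of the paper: given `m ≥ 2`, distinct points `p₁ p₂ ∈ ℂ^m` and
matrices `A₁, A₂ ∈ SL_m(ℂ)`, there is an algebraic (polynomial) automorphism `φ`
of `ℂ^m` fixing `p₁` and `p₂` whose differentials at `p₁` and `p₂` are `A₁` and `A₂`. -/
theorem stmt0 (m : ℕ) (hm : 2 ≤ m) (p₁ p₂ : Fin m → ℂ) (hp : p₁ ≠ p₂)
    (A₁ A₂ : Matrix (Fin m) (Fin m) ℂ) (hA₁ : A₁.det = 1) (hA₂ : A₂.det = 1) :
    ∃ φ ψ : (Fin m → ℂ) → (Fin m → ℂ),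
      IsPolyMap φ ∧ IsPolyMap ψ ∧ ψ ∘ φ = id ∧ φ ∘ ψ = id ∧
      φ p₁ = p₁ ∧ φ p₂ = p₂ ∧
      HasFDerivAt φ (LinearMap.toContinuousLinearMap (Matrix.mulVecLin A₁)) p₁ ∧
      HasFDerivAt φ (LinearMap.toContinuousLinearMap (Matrix.mulVecLin A₂)) p₂ :=
  stmt0_general m p₁ p₂ hp A₁ A₂ hA₁ hA₂
end

section
/- Let X ⊆ ℂ^m be a closed algebraic subvariety, let 1 ≤ k < m, and let ω_k(X) ⊆ Gr_k(ℂ^m) be the set of k-dimensional linear subspaces V for which there exists a sequence {x^j} ⊆ X with |x^j| → ∞ and lim_{j→∞} π(x^j) ⊆ V, where π : ℂ^m \ {0} → ℙ^{m−1} is the canonical projection. Then for every V ∈ Gr_k(ℂ^m) \ ω_k(X), the restricted linear projection p_V|_X : X → ℂ^m / V is a proper map. -/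
/-!
If the preimage were unbounded, it would contain a sequence `x j → ∞`; a subsequence of the
directions `‖x j‖⁻¹ • x j` converges to a unit vector `v`. The classes of the `x j` modulo `V`
stay in the bounded set `K`, so rescaling them by `‖x j‖⁻¹ → 0` sends them to `0`, which forces
`v ∈ V`, against `V ∉ ω_k(X)`. Closedness holds because `X` is algebraic and `V` is closed.
-/

/-- A subset of `ℂ^σ` is an (affine) algebraic set if it is the common zero locus
of a set of polynomials. -/
def IsAlgSet {σ : Type*} (S : Set (σ → ℂ)) : Prop :=
  ∃ T : Set (MvPolynomial σ ℂ), S = {x | ∀ P ∈ T, MvPolynomial.eval x P = 0}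

open Filter Topology Bornology

theorem IsAlgSet.isClosed {σ : Type*} {S : Set (σ → ℂ)} (hS : IsAlgSet S) : IsClosed S := by
  obtain ⟨T, rfl⟩ := hS
  simp only [Set.ofPred_forall]
  exact isClosed_biInter fun P _ => isClosed_eq (MvPolynomial.continuous_eval P) continuous_const

theorem exists_seq_mem_tendsto_norm_atTop {E : Type*} [SeminormedAddCommGroup E] {S : Set E}
    (hS : ¬IsBounded S) : ∃ x : ℕ → E, (∀ j, x j ∈ S) ∧ Tendsto (‖x ·‖) atTop atTop := by
  simp only [isBounded_iff_forall_norm_le, not_exists, not_forall, not_le] at hS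
  choose x hxS hx using fun j : ℕ => hS j
  exact ⟨x, hxS, tendsto_atTop_mono (fun j => (hx j).le) tendsto_natCast_atTop_atTop⟩

theorem exists_strictMono_tendsto_inv_norm_smul {𝕜 E : Type*} [RCLike 𝕜] [NormedAddCommGroup E]
    [NormedSpace 𝕜 E] [ProperSpace E] {x : ℕ → E} (hx : Tendsto (‖x ·‖) atTop atTop) :
    ∃ v, ‖v‖ = 1 ∧ ∃ φ : ℕ → ℕ, StrictMono φ ∧
      Tendsto (fun j => (‖x (φ j)‖ : 𝕜)⁻¹) atTop (𝓝 0) ∧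
      Tendsto (fun j => (‖x (φ j)‖ : 𝕜)⁻¹ • x (φ j)) atTop (𝓝 v) := by
  have hsphere : ∀ᶠ j in atTop, (‖x j‖ : 𝕜)⁻¹ • x j ∈ Metric.sphere (0 : E) 1 :=
    (hx.eventually_gt_atTop 0).mono fun j hj => by simp [norm_smul, hj.ne']
  obtain ⟨v, hv, φ, hφ, hlim⟩ := (isCompact_sphere (0 : E) 1).tendsto_subseq' hsphere.frequently
  have hinv : Tendsto (fun j => ‖x (φ j)‖⁻¹) atTop (𝓝 0) :=
    (hx.comp hφ.tendsto_atTop).inv_tendsto_atTop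
  refine ⟨v, mem_sphere_zero_iff_norm.mp hv, φ, hφ, ?_, hlim⟩
  simpa [Function.comp_def] using ((RCLike.continuous_ofReal (K := 𝕜)).tendsto 0).comp hinv

theorem Submodule.mem_of_tendsto_smul_of_forall_mkQ_mem {𝕜 E α : Type*} [NormedField 𝕜]
    [SeminormedAddCommGroup E] [NormedSpace 𝕜 E] (V : Submodule 𝕜 E) [IsClosed (V : Set E)]
    {l : Filter α} [l.NeBot] {K : Set (E ⧸ V)} (hK : IsBounded K) {x : α → E}
    (hxK : ∀ j, V.mkQ (x j) ∈ K) {c : α → 𝕜} (hc : Tendsto c l (𝓝 0)) {v : E}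
    (hcx : Tendsto (fun j => c j • x j) l (𝓝 v)) : v ∈ V := by
  obtain ⟨C, hC⟩ := isBounded_iff_forall_norm_le.mp hK
  have hzero : Tendsto (fun j => V.mkQ (c j • x j)) l (𝓝 0) := by
    simp only [map_smul]
    exact hc.zero_smul_isBoundedUnder_le (isBoundedUnder_of ⟨C, fun j => hC _ (hxK j)⟩)
  have hmk : Tendsto (fun j => V.mkQ (c j • x j)) l (𝓝 (V.mkQ v)) :=
    (continuous_quot_mk.tendsto v).comp hcx
  exact (Submodule.Quotient.mk_eq_zero V).mp (tendsto_nhds_unique hmk hzero)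

open Filter in
theorem stmt5_general (m : ℕ)
    (X : Set (Fin m → ℂ)) (hX : IsAlgSet X)
    (V : Submodule ℂ (Fin m → ℂ))
    (hout : ¬ ∃ x : ℕ → (Fin m → ℂ), (∀ j, x j ∈ X) ∧
        Tendsto (fun j => ‖x j‖) atTop atTop ∧
        ∃ v, v ∈ V ∧ v ≠ 0 ∧ ∃ c : ℕ → ℂ,
          Tendsto (fun j => c j • x j) atTop (nhds v)) :
    ∀ K : Set ((Fin m → ℂ) ⧸ V), IsCompact K →
      IsCompact {x : Fin m → ℂ | x ∈ X ∧ Submodule.Quotient.mk x ∈ K} := by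
  intro K hK
  have : IsClosed (V : Set (Fin m → ℂ)) := V.closed_of_finiteDimensional
  refine Metric.isCompact_of_isClosed_isBounded
    (hX.isClosed.inter (hK.isClosed.preimage continuous_quot_mk)) (by_contra fun hunb => ?_)
  obtain ⟨x, hxS, hx⟩ := exists_seq_mem_tendsto_norm_atTop hunb
  obtain ⟨v, hv, φ, hφ, hc, hcx⟩ := exists_strictMono_tendsto_inv_norm_smul (𝕜 := ℂ) hx
  refine hout ⟨x ∘ φ, fun j => (hxS (φ j)).1, hx.comp hφ.tendsto_atTop, v, ?_,
    norm_ne_zero_iff.mp (hv ▸ one_ne_zero), _, hcx⟩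
  exact V.mem_of_tendsto_smul_of_forall_mkQ_mem hK.isBounded (fun j => (hxS (φ j)).2) hc hcx

open Filter in
/-- Part of Lemma 3.7: let `X ⊆ ℂ^m` be a closed algebraic subvariety, `1 ≤ k < m`
and `V` a `k`-dimensional linear subspace not in `ω_k(X)`, i.e. there is no sequence
in `X` going to infinity whose limit direction (in `ℙ^{m-1}`) lies in `V`.  Then
the projection `p_V|_X : X → ℂ^m/V` is proper: preimages of compact sets are compact.
(Convergence of directions `π(x^j) → [v]` is expressed by the existence of scalars
`c j` with `c j • x j → v`.) -/
theorem stmt5 (m k : ℕ) (hk1 : 1 ≤ k) (hkm : k < m)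
    (X : Set (Fin m → ℂ)) (hX : IsAlgSet X)
    (V : Submodule ℂ (Fin m → ℂ)) (hV : Module.finrank ℂ V = k)
    (hout : ¬ ∃ x : ℕ → (Fin m → ℂ), (∀ j, x j ∈ X) ∧
        Tendsto (fun j => ‖x j‖) atTop atTop ∧
        ∃ v, v ∈ V ∧ v ≠ 0 ∧ ∃ c : ℕ → ℂ,
          Tendsto (fun j => c j • x j) atTop (nhds v)) :
    ∀ K : Set ((Fin m → ℂ) ⧸ V), IsCompact K →
      IsCompact {x : Fin m → ℂ | x ∈ X ∧ Submodule.Quotient.mk x ∈ K} :=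
  stmt5_general m X hX V hout
end

section
/- Let 2 ≤ p < q be coprime positive integers. The map f_{p,q} : ℂ* → ℂ² given by x ↦ (x^p, x^{−q}) is a proper injective algebraic immersion (hence a closed algebraic embedding of ℂ* into ℂ²). -/
/-!
On `‖f z‖ ≤ R` both `|z|^p` and `|z|^{-q}` are bounded by `R`, which traps `z` in the compact
annulus `R⁻¹ ≤ |z| ≤ R` inside `ℂ*`; this gives properness. If `f a = f b` then `a / b` is both a
`p`-th and a `q`-th root of unity, hence a `gcd(p, q)`-th one, so `a = b`. Finally the first
component of `f'(z)` is `p z^{p-1} ≠ 0`.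
-/

open Metric

section NormedDivisionRing

variable {𝕜 : Type*} [NormedDivisionRing 𝕜]

lemma norm_le_of_norm_pow_le {z : 𝕜} {m : ℕ} {R : ℝ} (hR : 1 ≤ R) (hm : m ≠ 0)
    (h : ‖z ^ m‖ ≤ R) : ‖z‖ ≤ R := by
  by_contra! hlt
  have : ‖z‖ ≤ ‖z‖ ^ m := le_self_pow₀ (hR.trans hlt.le) hm
  rw [norm_pow] at h
  linarith

lemma inv_le_norm_of_norm_zpow_neg_le {z : 𝕜} {n : ℕ} {R : ℝ} (hz : z ≠ 0) (hR : 1 ≤ R)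
    (hn : n ≠ 0) (h : ‖z ^ (-(n : ℤ))‖ ≤ R) : R⁻¹ ≤ ‖z‖ := by
  rw [zpow_neg, zpow_natCast, ← inv_pow] at h
  have := norm_le_of_norm_pow_le hR hn h
  rw [norm_inv] at this
  exact inv_le_of_inv_le₀ (norm_pos_iff.2 hz) this

lemma isCompact_annulus_ne_zero [ProperSpace 𝕜] {R : ℝ} (hR : 0 < R) :
    IsCompact (Subtype.val ⁻¹' (closedBall (0 : 𝕜) R ∩ {z | R⁻¹ ≤ ‖z‖}) :
      Set {z : 𝕜 // z ≠ 0}) := by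
  have hK : IsCompact (closedBall (0 : 𝕜) R ∩ {z | R⁻¹ ≤ ‖z‖}) :=
    (isCompact_closedBall 0 R).inter_right (isClosed_le continuous_const continuous_norm)
  refine Topology.IsInducing.subtypeVal.isCompact_preimage' hK fun z hz => ⟨⟨z, ?_⟩, rfl⟩
  rintro rfl
  simpa [hR.not_ge] using hz.2

end NormedDivisionRing

theorem isProperMap_pow_zpow_neg {𝕜 : Type*} [NontriviallyNormedField 𝕜] [ProperSpace 𝕜]
    {m n : ℕ} (hm : m ≠ 0) (hn : n ≠ 0) :
    IsProperMap (fun z : {z : 𝕜 // z ≠ 0} => (z.val ^ m, z.val ^ (-(n : ℤ)))) := by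
  have hcont : Continuous (fun z : {z : 𝕜 // z ≠ 0} => (z.val ^ m, z.val ^ (-(n : ℤ)))) :=
    (continuous_subtype_val.pow m).prodMk
      (continuous_subtype_val.zpow₀ _ fun z => Or.inl z.2)
  refine isProperMap_iff_isCompact_preimage.2 ⟨hcont, fun K hK => ?_⟩
  obtain ⟨r, hr⟩ := hK.isBounded.subset_closedBall 0
  have hR : 1 ≤ max r 1 := le_max_right r 1
  refine (isCompact_annulus_ne_zero (zero_lt_one.trans_le hR)).of_isClosed_subset
    (hK.isClosed.preimage hcont) fun z hz => ?_
  have hbound := mem_closedBall_zero_iff.1 (hr hz)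
  obtain ⟨hfst, hsnd⟩ := norm_prod_le_iff.1 (hbound.trans (le_max_left r 1))
  exact ⟨mem_closedBall_zero_iff.2 (norm_le_of_norm_pow_le hR hm hfst),
    inv_le_norm_of_norm_zpow_neg_le z.2 hR hn hsnd⟩

lemma eq_of_pow_eq_pow_of_coprime {G₀ : Type*} [CommGroupWithZero G₀] {a b : G₀} {m n : ℕ}
    (hb : b ≠ 0) (hmn : m.Coprime n) (hm : a ^ m = b ^ m) (hn : a ^ n = b ^ n) : a = b := by
  have hroot : (a / b) ^ m.gcd n = 1 := pow_gcd_eq_one.2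
    ⟨by rw [div_pow, hm, div_self (pow_ne_zero _ hb)],
     by rw [div_pow, hn, div_self (pow_ne_zero _ hb)]⟩
  rwa [hmn, pow_one, div_eq_one_iff_eq hb] at hroot

lemma deriv_prodMk_ne_zero_of_deriv_ne_zero {𝕜 E F : Type*} [NontriviallyNormedField 𝕜]
    [NormedAddCommGroup E] [NormedSpace 𝕜 E] [NormedAddCommGroup F] [NormedSpace 𝕜 F]
    {f : 𝕜 → E} {g : 𝕜 → F} {x : 𝕜} (hf : DifferentiableAt 𝕜 f x)
    (hg : DifferentiableAt 𝕜 g x) (h : deriv f x ≠ 0) :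
    deriv (fun w => (f w, g w)) x ≠ 0 := by
  rw [(hf.hasDerivAt.prodMk hg.hasDerivAt).deriv]
  exact fun h0 => h (congrArg Prod.fst h0)

theorem stmt12_general (p q : ℕ) (hp : 2 ≤ p) (hco : Nat.Coprime p q) :
    IsProperMap (fun z : {z : ℂ // z ≠ 0} =>
      ((z.val ^ p, z.val ^ (-(q : ℤ))) : ℂ × ℂ)) ∧
    Function.Injective (fun z : {z : ℂ // z ≠ 0} =>
      ((z.val ^ p, z.val ^ (-(q : ℤ))) : ℂ × ℂ)) ∧
    ∀ z : ℂ, z ≠ 0 → deriv (fun w : ℂ => ((w ^ p, w ^ (-(q : ℤ))) : ℂ × ℂ)) z ≠ 0 := by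
  have hp0 : p ≠ 0 := by omega
  have hq0 : q ≠ 0 := by
    rintro rfl
    rw [Nat.coprime_zero_right] at hco
    omega
  refine ⟨isProperMap_pow_zpow_neg hp0 hq0, fun a b hab => ?_, fun z hz => ?_⟩
  · obtain ⟨hpow, hzpow⟩ := Prod.mk.inj hab
    rw [zpow_neg, zpow_neg, inv_inj, zpow_natCast, zpow_natCast] at hzpow
    exact Subtype.ext (eq_of_pow_eq_pow_of_coprime b.2 hco hpow hzpow)
  · refine deriv_prodMk_ne_zero_of_deriv_ne_zero (differentiableAt_pow p)
      (differentiableAt_zpow.2 (Or.inl hz)) ?_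
    rw [deriv_pow_field]
    exact mul_ne_zero (Nat.cast_ne_zero.2 hp0) (pow_ne_zero _ hz)

/-- For coprime integers `2 ≤ p < q`, the map `f_{p,q} : ℂ* → ℂ²`, `x ↦ (x^p, x^{-q})`,
is a proper injective algebraic immersion (hence a closed algebraic embedding of `ℂ*`
into `ℂ²`). -/
theorem stmt12 (p q : ℕ) (hp : 2 ≤ p) (hpq : p < q) (hco : Nat.Coprime p q) :
    IsProperMap (fun z : {z : ℂ // z ≠ 0} =>
      ((z.val ^ p, z.val ^ (-(q : ℤ))) : ℂ × ℂ)) ∧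
    Function.Injective (fun z : {z : ℂ // z ≠ 0} =>
      ((z.val ^ p, z.val ^ (-(q : ℤ))) : ℂ × ℂ)) ∧
    ∀ z : ℂ, z ≠ 0 → deriv (fun w : ℂ => ((w ^ p, w ^ (-(q : ℤ))) : ℂ × ℂ)) z ≠ 0 :=
  stmt12_general p q hp hco
end
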